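/- Fix T > 0, d ≥ 1, β = (β₁,…,β_d) ∈ ℝ^d with ‖β‖_∞ = max_i |β_i|, and a d×d substochastic matrix Q with zero diagonal and Qⁿ → 0, with regulator map ψ. Suppose K ∈ (0,∞) is such that ψ is K-Lipschitz with respect to the uniform metric: for all ξ, ζ ∈ ∏_{i=1}^d D[0,T], max_i sup_{t∈[0,T]} |ψ⁽ⁱ⁾(ξ)(t) − ψ⁽ⁱ⁾(ζ)(t)| ≤ K max_i sup_{t∈[0,T]} |ξ⁽ⁱ⁾(t) − ζ⁽ⁱ⁾(t)|. Then for every ζ = (ζ⁽¹⁾,…,ζ⁽ᵈ⁾) with each ζ⁽ⁱ⁾ ∈ D^{β_i}[0,T], and every nondecreasing w : [0,T] → [0,T] with w(0) = 0 and w(T) = T, one has max_i sup_{t∈[0,T]} |ψ⁽ⁱ⁾(ζ)(w(t)) − ψ⁽ⁱ⁾(ζ)(t)| ≤ K ‖β‖_∞ sup_{t∈[0,T]} |w(t) − t|. -/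

import Mathlib

open Set Filter

noncomputable section

/-- `f` is càdlàg on `[0,T]`: right-continuous on `[0,T)` and with left limits on `(0,T]`. -/
def Cadlag (T : ℝ) (f : ℝ → ℝ) : Prop :=
  (∀ t ∈ Set.Ico (0:ℝ) T, Filter.Tendsto f (nhdsWithin t (Set.Ici t)) (nhds (f t))) ∧
  (∀ t ∈ Set.Ioc (0:ℝ) T, ∃ L : ℝ, Filter.Tendsto f (nhdsWithin t (Set.Iio t)) (nhds L))

/-- `lam` is a strictly increasing continuous bijection of `[0,T]` onto itself. -/
def IsTimeChange (T : ℝ) (lam : ℝ → ℝ) : Prop :=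
  StrictMonoOn lam (Set.Icc 0 T) ∧ ContinuousOn lam (Set.Icc 0 T) ∧
  Set.MapsTo lam (Set.Icc 0 T) (Set.Icc 0 T) ∧
  Set.SurjOn lam (Set.Icc 0 T) (Set.Icc 0 T) ∧ lam 0 = 0 ∧ lam T = T

/-- Uniform distance of two (bounded) functions over `[0,T]`. -/
def unifDist (T : ℝ) (f g : ℝ → ℝ) : ℝ :=
  sSup {r : ℝ | ∃ t ∈ Set.Icc (0:ℝ) T, r = |f t - g t|}

/-- The Skorokhod `J₁` distance on `[0,T]`. -/
def J1Dist (T : ℝ) (f g : ℝ → ℝ) : ℝ :=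
  sInf {r : ℝ | ∃ lam : ℝ → ℝ, IsTimeChange T lam ∧
    r = max (unifDist T (fun t => f (lam t)) g) (unifDist T lam id)}

/-- The product `J₁` distance on `d`-tuples of paths. -/
def prodJ1Dist (T : ℝ) {d : ℕ} (ξ ζ : Fin d → ℝ → ℝ) : ℝ :=
  ∑ i, J1Dist T (ξ i) (ζ i)

/-- A substochastic routing matrix with zero diagonal whose powers tend to zero. -/
def Substochastic {d : ℕ} (Q : Matrix (Fin d) (Fin d) ℝ) : Prop :=
  (∀ i j, 0 ≤ Q i j) ∧ (∀ i, Q i i = 0) ∧ (∀ i, ∑ j, Q i j ≤ 1) ∧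
  Filter.Tendsto (fun n : ℕ => Q ^ n) Filter.atTop (nhds 0)

/-- The reflection matrix `𝒬 = I - Qᵀ`. -/
def refMatrix {d : ℕ} (Q : Matrix (Fin d) (Fin d) ℝ) : Matrix (Fin d) (Fin d) ℝ :=
  1 - Q.transpose

/-- `ζ` belongs to the feasible regulator set `Ψ(ξ)`: each coordinate of `ζ` is a
nondecreasing càdlàg path, nonnegative at the origin, and `ξ + 𝒬 ζ ≥ 0` on `[0,T]`. -/
def Feasible (T : ℝ) {d : ℕ} (Q : Matrix (Fin d) (Fin d) ℝ)
    (ξ ζ : Fin d → ℝ → ℝ) : Prop :=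
  (∀ i, Cadlag T (ζ i) ∧ MonotoneOn (ζ i) (Set.Icc 0 T) ∧ 0 ≤ ζ i 0) ∧
  (∀ t ∈ Set.Icc (0:ℝ) T, ∀ i, 0 ≤ ξ i t + ∑ j, refMatrix Q i j * ζ j t)

/-- The regulator map `ψ`, defined coordinatewise and pointwise as the infimum of the
feasible regulator set. -/
def regulator (T : ℝ) {d : ℕ} (Q : Matrix (Fin d) (Fin d) ℝ)
    (ξ : Fin d → ℝ → ℝ) : Fin d → ℝ → ℝ :=
  fun i t => sInf {z : ℝ | ∃ ζ, Feasible T Q ξ ζ ∧ z = ζ i t}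

/-- The content map `φ(ξ) = ξ + 𝒬 ψ(ξ)`. -/
def content (T : ℝ) {d : ℕ} (Q : Matrix (Fin d) (Fin d) ℝ)
    (ξ : Fin d → ℝ → ℝ) : Fin d → ℝ → ℝ :=
  fun i t => ξ i t + ∑ j, refMatrix Q i j * regulator T Q ξ j t

/-- `D^β[0,T]`: càdlàg paths `f` with `f 0 ≥ 0` such that `t ↦ f t - β t` is nondecreasing. -/
def DBeta (T β : ℝ) (f : ℝ → ℝ) : Prop :=
  Cadlag T f ∧ 0 ≤ f 0 ∧ MonotoneOn (fun t => f t - β * t) (Set.Icc 0 T)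

/-- `max_i sup_{t ∈ [0,T]} |ξ⁽ⁱ⁾(t) - ζ⁽ⁱ⁾(t)|`, the uniform distance of tuples of paths. -/
def supDistTuple (T : ℝ) {d : ℕ} (ξ ζ : Fin d → ℝ → ℝ) : ℝ :=
  sSup {r : ℝ | ∃ i : Fin d, ∃ t ∈ Set.Icc (0:ℝ) T, r = |ξ i t - ζ i t|}

/-- `sup_{t ∈ [0,T]} |w(t) - t|`, the uniform deviation of a time deformation from identity. -/
def supTimeDev (T : ℝ) (w : ℝ → ℝ) : ℝ :=
  sSup {r : ℝ | ∃ t ∈ Set.Icc (0:ℝ) T, r = |w t - t|}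


/-!
Fix `t₁ ≤ t₂` and let `ρ` be the clock that stops on `[t₁, t₂]`, so `ρ t₂ = t₁` and
`0 ≤ u - ρ u ≤ t₂ - t₁`. Since `ζ⁽ʲ⁾ - βⱼ·id` is nondecreasing, `ζ ∘ ρ` lies below
`ξ := ζ + |β|·(id - ρ)`, so composing any element of `Ψ(ζ)` with `ρ` gives an element of `Ψ(ξ)`;
hence `ψ(ξ)(t₂) ≤ ψ(ζ)(t₁)`. As `‖ξ - ζ‖ ≤ ‖β‖_∞ (t₂ - t₁)`, the Lipschitz bound gives
`ψ(ζ)(t₂) ≤ ψ(ζ)(t₁) + K ‖β‖_∞ (t₂ - t₁)`, and `ψ(ζ)` is nondecreasing. Apply this to the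
pair `t, w t`.
-/

section Paths

variable {T : ℝ} {f g : ℝ → ℝ}

theorem Cadlag.add_continuous (hf : Cadlag T f) (hg : Continuous g) :
    Cadlag T (fun u => f u + g u) :=
  ⟨fun t ht => (hf.1 t ht).add hg.continuousWithinAt,
    fun t ht => let ⟨L, hL⟩ := hf.2 t ht; ⟨L + g t, hL.add hg.continuousWithinAt⟩⟩

structure IsDelay (ρ : ℝ → ℝ) : Prop where
  monotone : Monotone ρ
  continuous : Continuous ρ
  nonneg : ∀ u, 0 ≤ u → 0 ≤ ρ u
  le_self : ∀ u, ρ u ≤ u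

theorem IsDelay.mapsTo {ρ : ℝ → ℝ} (hρ : IsDelay ρ) : MapsTo ρ (Icc 0 T) (Icc 0 T) :=
  fun u hu => ⟨hρ.nonneg u hu.1, (hρ.le_self u).trans hu.2⟩

theorem Cadlag.comp_isDelay {ρ : ℝ → ℝ} (hf : Cadlag T f) (hρ : IsDelay ρ) :
    Cadlag T (f ∘ ρ) := by
  refine ⟨fun t ht => ?_, fun t ht => ?_⟩
  · have hρt : ρ t ∈ Ico 0 T := ⟨hρ.nonneg t ht.1, (hρ.le_self t).trans_lt ht.2⟩
    exact (hf.1 _ hρt).comp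
      (hρ.continuous.continuousWithinAt.tendsto_nhdsWithin fun u hu => hρ.monotone hu)
  by_cases hflat : ∃ s < t, ρ s = ρ t
  · obtain ⟨s, hst, hs⟩ := hflat
    refine ⟨f (ρ t), tendsto_const_nhds.congr' ?_⟩
    filter_upwards [Ioo_mem_nhdsLT hst] with u hu
    rw [Function.comp_apply, le_antisymm (hρ.monotone hu.2.le) (hs ▸ hρ.monotone hu.1.le)]
  · push Not at hflat
    have hlt : ∀ u < t, ρ u < ρ t := fun u hu => (hρ.monotone hu.le).lt_of_ne (hflat u hu)
    obtain ⟨L, hL⟩ :=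
      hf.2 (ρ t) ⟨(hρ.nonneg 0 le_rfl).trans_lt (hlt 0 ht.1), (hρ.le_self t).trans ht.2⟩
    exact ⟨L, hL.comp (hρ.continuous.continuousWithinAt.tendsto_nhdsWithin hlt)⟩

theorem DBeta.le_add_abs_mul {β : ℝ} (hf : DBeta T β f) {s u : ℝ} (hs : s ∈ Icc 0 T)
    (hu : u ∈ Icc 0 T) (hsu : s ≤ u) : f s ≤ f u + |β| * (u - s) := by
  have hinc : f s - β * s ≤ f u - β * u := hf.2.2 hs hu hsu
  nlinarith [neg_abs_le β, sub_nonneg.2 hsu]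

end Paths

section Freeze

variable {a b : ℝ}

/-- The clock that runs at unit speed except on `[a, b]`, where it stops. -/
def freeze (a b u : ℝ) : ℝ := min u a + max (u - b) 0

theorem isDelay_freeze (ha : 0 ≤ a) (hab : a ≤ b) : IsDelay (freeze a b) where
  monotone := (monotone_id.min monotone_const).add
    (Monotone.max (fun _ _ h => sub_le_sub_right h b) monotone_const)
  continuous := by unfold freeze; fun_prop
  nonneg u hu := add_nonneg (le_min hu ha) (le_max_right _ _)
  le_self u := by
    unfold freeze
    rcases min_cases u a with h₁ | h₁ <;>
      rcases max_cases (u - b) 0 with h₂ | h₂ <;> linarith [h₁.1, h₁.2, h₂.1, h₂.2]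

theorem freeze_right (hab : a ≤ b) : freeze a b b = a := by
  simp [freeze, hab]

theorem sub_freeze_le (hab : a ≤ b) (u : ℝ) : u - freeze a b u ≤ b - a := by
  unfold freeze
  rcases min_cases u a with h₁ | h₁ <;>
    rcases max_cases (u - b) 0 with h₂ | h₂ <;> linarith [h₁.1, h₁.2, h₂.1, h₂.2]

end Freeze

section SupDist

variable {T : ℝ} {d : ℕ} {ξ ζ : Fin d → ℝ → ℝ}

theorem abs_sub_le_supDistTuple {C : ℝ} (hC : ∀ j, ∀ u ∈ Icc 0 T, |ξ j u - ζ j u| ≤ C)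
    (i : Fin d) {t : ℝ} (ht : t ∈ Icc 0 T) : |ξ i t - ζ i t| ≤ supDistTuple T ξ ζ :=
  le_csSup ⟨C, by rintro _ ⟨j, u, hu, rfl⟩; exact hC j u hu⟩ ⟨i, t, ht, rfl⟩

theorem supDistTuple_le {C : ℝ} (hC₀ : 0 ≤ C) (hC : ∀ j, ∀ u ∈ Icc 0 T, |ξ j u - ζ j u| ≤ C) :
    supDistTuple T ξ ζ ≤ C :=
  Real.sSup_le (by rintro _ ⟨j, u, hu, rfl⟩; exact hC j u hu) hC₀

theorem abs_sub_le_supTimeDev {w : ℝ → ℝ} (hw : MapsTo w (Icc 0 T) (Icc 0 T)) {t : ℝ}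
    (ht : t ∈ Icc 0 T) : |w t - t| ≤ supTimeDev T w := by
  refine le_csSup ⟨T, ?_⟩ ⟨t, ht, rfl⟩
  rintro _ ⟨u, hu, rfl⟩
  have hwu := hw hu
  rw [abs_le]
  constructor <;> linarith [hu.1, hu.2, hwu.1, hwu.2]

theorem supTimeDev_nonneg (w : ℝ → ℝ) : 0 ≤ supTimeDev T w :=
  Real.sSup_nonneg (by rintro _ ⟨u, -, rfl⟩; exact abs_nonneg _)

end SupDist

section Regulator

variable {T : ℝ} {d : ℕ} {Q : Matrix (Fin d) (Fin d) ℝ} {ξ ξ' ζ ζ' : Fin d → ℝ → ℝ}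
  {i : Fin d} {t : ℝ}

theorem Feasible.nonneg (h : Feasible T Q ξ ζ') (i : Fin d) (ht : t ∈ Icc 0 T) : 0 ≤ ζ' i t :=
  (h.1 i).2.2.trans ((h.1 i).2.1 ⟨le_rfl, ht.1.trans ht.2⟩ ht ht.1)

theorem Feasible.mono_left (h : Feasible T Q ξ ζ') (hξ : ∀ j, ∀ u ∈ Icc 0 T, ξ j u ≤ ξ' j u) :
    Feasible T Q ξ' ζ' :=
  ⟨h.1, fun u hu j => (h.2 u hu j).trans (by linarith [hξ j u hu])⟩

theorem Feasible.comp_isDelay {ρ : ℝ → ℝ} (h : Feasible T Q ξ ζ') (hρ : IsDelay ρ) :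
    Feasible T Q (fun j u => ξ j (ρ u)) (fun j u => ζ' j (ρ u)) := by
  refine ⟨fun j => ⟨(h.1 j).1.comp_isDelay hρ, ?_, ?_⟩, fun u hu => h.2 _ (hρ.mapsTo hu)⟩
  · exact fun u hu v hv huv => (h.1 j).2.1 (hρ.mapsTo hu) (hρ.mapsTo hv) (hρ.monotone huv)
  · have hρ₀ : ρ 0 = 0 := le_antisymm (hρ.le_self 0) (hρ.nonneg 0 le_rfl)
    simpa only [hρ₀] using (h.1 j).2.2

theorem regulator_nonneg (ξ : Fin d → ℝ → ℝ) (i : Fin d) (ht : t ∈ Icc 0 T) :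
    0 ≤ regulator T Q ξ i t :=
  Real.sInf_nonneg (by rintro _ ⟨ζ', h, rfl⟩; exact h.nonneg i ht)

theorem regulator_le_of_feasible (h : Feasible T Q ξ ζ') (i : Fin d) (ht : t ∈ Icc 0 T) :
    regulator T Q ξ i t ≤ ζ' i t :=
  csInf_le ⟨0, by rintro _ ⟨ζ'', h'', rfl⟩; exact h''.nonneg i ht⟩ ⟨ζ', h, rfl⟩

theorem regulator_eq_zero_of_not_feasible (h : ¬∃ ζ', Feasible T Q ξ ζ') (i : Fin d) (t : ℝ) :
    regulator T Q ξ i t = 0 := by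
  have hempty : {z : ℝ | ∃ ζ', Feasible T Q ξ ζ' ∧ z = ζ' i t} = ∅ :=
    eq_empty_of_forall_notMem fun _ ⟨ζ', hζ', _⟩ => h ⟨ζ', hζ'⟩
  rw [regulator, hempty, Real.sInf_empty]

theorem regulator_monotoneOn (h : Feasible T Q ξ ζ') (i : Fin d) :
    MonotoneOn (regulator T Q ξ i) (Icc 0 T) := by
  intro s hs u hu hsu
  refine le_csInf ⟨_, ζ', h, rfl⟩ ?_
  rintro _ ⟨ζ'', h'', rfl⟩
  exact (regulator_le_of_feasible h'' i hs).trans ((h''.1 i).2.1 hs hu hsu)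

theorem abs_regulator_sub_le (h : Feasible T Q ξ ζ') (h' : Feasible T Q ξ' ζ') (i : Fin d)
    (ht : t ∈ Icc 0 T) : |regulator T Q ξ i t - regulator T Q ξ' i t| ≤ ζ' i t := by
  have := regulator_le_of_feasible h i ht
  have := regulator_le_of_feasible h' i ht
  have := regulator_nonneg (Q := Q) ξ i ht
  have := regulator_nonneg (Q := Q) ξ' i ht
  rw [abs_le]
  constructor <;> linarith

theorem regulator_le_regulator_comp {ρ : ℝ → ℝ} (hρ : IsDelay ρ) (hζ : ∃ ζ₀, Feasible T Q ζ ζ₀)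
    (hle : ∀ j, ∀ u ∈ Icc 0 T, ζ j (ρ u) ≤ ξ j u) (i : Fin d) (ht : t ∈ Icc 0 T) :
    regulator T Q ξ i t ≤ regulator T Q ζ i (ρ t) := by
  obtain ⟨ζ₀, hζ₀⟩ := hζ
  refine le_csInf ⟨_, ζ₀, hζ₀, rfl⟩ ?_
  rintro _ ⟨ζ', hζ', rfl⟩
  exact regulator_le_of_feasible ((hζ'.comp_isDelay hρ).mono_left hle) i ht

variable {K B : ℝ} {β : Fin d → ℝ}

theorem regulator_le_add_of_dBeta (hK : 0 ≤ K)
    (hLip : ∀ ξ ζ : Fin d → ℝ → ℝ, (∀ i, Cadlag T (ξ i)) → (∀ i, Cadlag T (ζ i)) →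
      supDistTuple T (regulator T Q ξ) (regulator T Q ζ) ≤ K * supDistTuple T ξ ζ)
    (hζ : ∀ j, DBeta T (β j) (ζ j)) (hζ' : Feasible T Q ζ ζ') (hB : ∀ j, |β j| ≤ B)
    (i : Fin d) {t₁ t₂ : ℝ} (h₀₁ : 0 ≤ t₁) (h₁₂ : t₁ ≤ t₂) (h₂T : t₂ ≤ T) :
    regulator T Q ζ i t₂ ≤ regulator T Q ζ i t₁ + K * (B * (t₂ - t₁)) := by
  have hρ := isDelay_freeze h₀₁ h₁₂
  have ht₂ : t₂ ∈ Icc 0 T := ⟨h₀₁.trans h₁₂, h₂T⟩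
  set ξ : Fin d → ℝ → ℝ := fun j u => ζ j u + |β j| * (u - freeze t₁ t₂ u)
  have hlag : ∀ u, 0 ≤ u - freeze t₁ t₂ u := fun u => sub_nonneg.2 (hρ.le_self u)
  have hξ_cadlag : ∀ j, Cadlag T (ξ j) := fun j =>
    (hζ j).1.add_continuous (continuous_const.mul (continuous_id.sub hρ.continuous))
  have hζ_le_ξ : ∀ j, ∀ u ∈ Icc 0 T, ζ j u ≤ ξ j u := fun j u _ =>
    le_add_of_nonneg_right (mul_nonneg (abs_nonneg _) (hlag u))
  have hfrozen : regulator T Q ξ i t₂ ≤ regulator T Q ζ i t₁ := by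
    simpa only [freeze_right h₁₂] using regulator_le_regulator_comp hρ ⟨ζ', hζ'⟩
      (fun j u hu => (hζ j).le_add_abs_mul (hρ.mapsTo hu) hu (hρ.le_self u)) i ht₂
  have hξζ : supDistTuple T ξ ζ ≤ B * (t₂ - t₁) := by
    refine supDistTuple_le (mul_nonneg ((abs_nonneg _).trans (hB i)) (sub_nonneg.2 h₁₂))
      fun j u _ => ?_
    rw [add_sub_cancel_left, abs_of_nonneg (mul_nonneg (abs_nonneg _) (hlag u))]
    exact mul_le_mul (hB j) (sub_freeze_le h₁₂ u) (hlag u) ((abs_nonneg _).trans (hB j))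
  have hψ : |regulator T Q ξ i t₂ - regulator T Q ζ i t₂| ≤ K * (B * (t₂ - t₁)) := by
    refine (abs_sub_le_supDistTuple (C := ∑ j, ζ' j T) (fun j u hu => ?_) i ht₂).trans
      ((hLip ξ ζ hξ_cadlag fun j => (hζ j).1).trans (mul_le_mul_of_nonneg_left hξζ hK))
    calc |regulator T Q ξ j u - regulator T Q ζ j u| ≤ ζ' j u :=
          abs_regulator_sub_le (hζ'.mono_left hζ_le_ξ) hζ' j hu
      _ ≤ ζ' j T := (hζ'.1 j).2.1 hu ⟨hu.1.trans hu.2, le_rfl⟩ hu.2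
      _ ≤ ∑ k, ζ' k T := Finset.single_le_sum
          (fun k _ => hζ'.nonneg k ⟨hu.1.trans hu.2, le_rfl⟩) (Finset.mem_univ j)
  linarith [(abs_le.1 hψ).1]

theorem abs_regulator_sub_le_of_dBeta (hK : 0 ≤ K)
    (hLip : ∀ ξ ζ : Fin d → ℝ → ℝ, (∀ i, Cadlag T (ξ i)) → (∀ i, Cadlag T (ζ i)) →
      supDistTuple T (regulator T Q ξ) (regulator T Q ζ) ≤ K * supDistTuple T ξ ζ)
    (hζ : ∀ j, DBeta T (β j) (ζ j)) (hB : ∀ j, |β j| ≤ B) (i : Fin d) {s : ℝ}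
    (hs : s ∈ Icc 0 T) (ht : t ∈ Icc 0 T) :
    |regulator T Q ζ i s - regulator T Q ζ i t| ≤ K * (B * |s - t|) := by
  by_cases hfeas : ∃ ζ', Feasible T Q ζ ζ'
  · obtain ⟨ζ', hζ'⟩ := hfeas
    wlog hst : s ≤ t generalizing s t
    · rw [abs_sub_comm, abs_sub_comm s]
      exact this ht hs (le_of_not_ge hst)
    have hmono := regulator_monotoneOn hζ' i hs ht hst
    have hinc := regulator_le_add_of_dBeta hK hLip hζ hζ' hB i hs.1 hst ht.2
    rw [abs_of_nonpos (by linarith), abs_of_nonpos (sub_nonpos.2 hst)]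
    linarith
  · -- `ψ(ζ)` is the junk value `sInf ∅ = 0` when `Ψ(ζ)` is empty.
    simp only [regulator_eq_zero_of_not_feasible hfeas, sub_self, abs_zero]
    exact mul_nonneg hK (mul_nonneg ((abs_nonneg _).trans (hB i)) (abs_nonneg _))

end Regulator

theorem regulator_time_deformation_bound_general
    (T : ℝ) (d : ℕ) (hd : 0 < d) (β : Fin d → ℝ)
    (Q : Matrix (Fin d) (Fin d) ℝ)
    (K : ℝ) (hK : 0 < K)
    (hLip : ∀ ξ ζ : Fin d → ℝ → ℝ, (∀ i, Cadlag T (ξ i)) → (∀ i, Cadlag T (ζ i)) →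
      supDistTuple T (regulator T Q ξ) (regulator T Q ζ) ≤ K * supDistTuple T ξ ζ)
    (ζ : Fin d → ℝ → ℝ) (hζ : ∀ i, DBeta T (β i) (ζ i))
    (w : ℝ → ℝ)
    (hwmap : Set.MapsTo w (Set.Icc 0 T) (Set.Icc 0 T)) :
    supDistTuple T (fun i t => regulator T Q ζ i (w t)) (regulator T Q ζ) ≤
      K * (Finset.univ.sup' (⟨⟨0, hd⟩, Finset.mem_univ _⟩ :
            (Finset.univ : Finset (Fin d)).Nonempty) fun i => |β i|) *
        supTimeDev T w := by
  set B := Finset.univ.sup' _ fun i => |β i|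
  have hB : ∀ i, |β i| ≤ B := fun i => Finset.le_sup' (fun i => |β i|) (Finset.mem_univ i)
  have hB₀ : 0 ≤ B := (abs_nonneg _).trans (hB ⟨0, hd⟩)
  refine supDistTuple_le (by have := supTimeDev_nonneg (T := T) w; positivity) fun i t ht => ?_
  calc |regulator T Q ζ i (w t) - regulator T Q ζ i t| ≤ K * (B * |w t - t|) :=
        abs_regulator_sub_le_of_dBeta hK.le hLip hζ hB i (hwmap ht) ht
    _ ≤ K * (B * supTimeDev T w) := by gcongr; exact abs_sub_le_supTimeDev hwmap ht
    _ = K * B * supTimeDev T w := (mul_assoc _ _ _).symm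

/-- If the regulator map `ψ` is `K`-Lipschitz in the uniform metric, then
for every `ζ ∈ ∏ D^{β_i}[0,T]` and every nondecreasing `w : [0,T] → [0,T]` with `w(0) = 0`
and `w(T) = T`, one has `max_i sup_t |ψ⁽ⁱ⁾(ζ)(w(t)) - ψ⁽ⁱ⁾(ζ)(t)| ≤ K ‖β‖_∞ ‖w - e‖_∞`. -/
theorem regulator_time_deformation_bound
    (T : ℝ) (hT : 0 < T) (d : ℕ) (hd : 0 < d) (β : Fin d → ℝ)
    (Q : Matrix (Fin d) (Fin d) ℝ) (hQ : Substochastic Q)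
    (K : ℝ) (hK : 0 < K)
    (hLip : ∀ ξ ζ : Fin d → ℝ → ℝ, (∀ i, Cadlag T (ξ i)) → (∀ i, Cadlag T (ζ i)) →
      supDistTuple T (regulator T Q ξ) (regulator T Q ζ) ≤ K * supDistTuple T ξ ζ)
    (ζ : Fin d → ℝ → ℝ) (hζ : ∀ i, DBeta T (β i) (ζ i))
    (w : ℝ → ℝ) (hw : MonotoneOn w (Set.Icc 0 T))
    (hwmap : Set.MapsTo w (Set.Icc 0 T) (Set.Icc 0 T))
    (hw0 : w 0 = 0) (hwT : w T = T) :
    supDistTuple T (fun i t => regulator T Q ζ i (w t)) (regulator T Q ζ) ≤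
      K * (Finset.univ.sup' (⟨⟨0, hd⟩, Finset.mem_univ _⟩ :
            (Finset.univ : Finset (Fin d)).Nonempty) fun i => |β i|) *
        supTimeDev T w :=
  regulator_time_deformation_bound_general T d hd β Q K hK hLip ζ hζ w hwmap
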